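/- Let X, Y be finitely supported with joint pmf p, and suppose the block graph of p (vertices are pairs (i,j) with p(i,j) > 0, edges between pairs sharing a row or column) is connected. If Z is jointly distributed with (X,Y) and I(X;Z|Y) = 0 and I(Y;Z|X) = 0, then Z is independent of the pair (X,Y); consequently I(X;Y|Z) = I(X;Y). -/

import Mathlib

open Real BigOperators Finset

section Defs
variable {Ω : Type} [Fintype Ω]

/-- `p` is a probability mass function on the finite sample space `Ω`. -/
def IsPmf (p : Ω → ℝ) : Prop := (∀ ω, 0 ≤ p ω) ∧ ∑ ω, p ω = 1

/-- Distribution of the random variable `f` under `p`. -/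
noncomputable def distOf (p : Ω → ℝ) {α : Type} [Fintype α] [DecidableEq α]
    (f : Ω → α) : α → ℝ := fun a => ∑ ω, if f ω = a then p ω else 0

/-- Shannon entropy (in nats) of the random variable `f` under `p`. -/
noncomputable def ent (p : Ω → ℝ) {α : Type} [Fintype α] [DecidableEq α]
    (f : Ω → α) : ℝ := ∑ a, Real.negMulLog (distOf p f a)

/-- Mutual information `I(f;g)` under `p`. -/
noncomputable def mi (p : Ω → ℝ) {α β : Type} [Fintype α] [DecidableEq α]
    [Fintype β] [DecidableEq β] (f : Ω → α) (g : Ω → β) : ℝ :=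
  ent p f + ent p g - ent p (fun ω => (f ω, g ω))

/-- Conditional mutual information `I(f;g|h)` under `p`. -/
noncomputable def cmi (p : Ω → ℝ) {α β γ : Type} [Fintype α] [DecidableEq α]
    [Fintype β] [DecidableEq β] [Fintype γ] [DecidableEq γ]
    (f : Ω → α) (g : Ω → β) (h : Ω → γ) : ℝ :=
  ent p (fun ω => (f ω, h ω)) + ent p (fun ω => (g ω, h ω))
    - ent p (fun ω => (f ω, g ω, h ω)) - ent p h

end Defs

/-- Tension region of `(X,Y)`: the set of triples
`(I(X;Z|Y), I(Y;Z|X), I(X;Y|Z))` as `Z` ranges over all finitely supported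
random variables jointly distributed with `(X,Y)`. -/
def tension {Ω : Type} [Fintype Ω] {α β : Type} [Fintype α] [DecidableEq α]
    [Fintype β] [DecidableEq β] (p : Ω → ℝ) (X : Ω → α) (Y : Ω → β) :
    Set (ℝ × ℝ × ℝ) :=
  { t | ∃ (m : ℕ) (q : α × β × Fin m → ℝ), IsPmf q ∧
      distOf q (fun w => (w.1, w.2.1)) = distOf p (fun ω => (X ω, Y ω)) ∧
      t = (cmi q (fun w => w.1) (fun w => w.2.2) (fun w => w.2.1),
           cmi q (fun w => w.2.1) (fun w => w.2.2) (fun w => w.1),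
           cmi q (fun w => w.1) (fun w => w.2.1) (fun w => w.2.2)) }

/-- One step in the block graph: two support points in the same row or
column. -/
def blockStep {α β : Type} (f : α × β → ℝ) (u v : α × β) : Prop :=
  0 < f u ∧ 0 < f v ∧ (u.1 = v.1 ∨ u.2 = v.2)

open InformationTheory

/-!
`I(X;Z|Y)` is the Kullback-Leibler divergence of `P(x,y,z)` from `P(x,y) P(y,z) / P(y)`, so by the
equality case of Gibbs' inequality it vanishes only if the two agree: the law of `Z` given
`(X,Y) = (i,j)` then depends only on `j`. Symmetrically, `I(Y;Z|X) = 0` makes it depend only on `i`.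
Hence it is constant along every edge of the block graph, so on the whole support when that graph
is connected, and this is the independence of `Z` and `(X,Y)`. The second claim then follows from
the identity `I(X;Y|Z) = I(X;Y) + I(XY;Z) - I(X;Z) - I(Y;Z)`, whose last three terms vanish.
-/

theorem eq_of_sum_mul_log_div_eq_zero {ι : Type} [Fintype ι] {a b : ι → ℝ}
    (ha : ∀ i, 0 ≤ a i) (hb : ∀ i, 0 ≤ b i) (hab : ∀ i, 0 < a i → 0 < b i)
    (hsum : ∑ i, a i = ∑ i, b i) (hlog : ∑ i, a i * log (a i / b i) = 0) : a = b := by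
  have ha_eq_zero (i : ι) (hbi : b i = 0) : a i = 0 :=
    le_antisymm (not_lt.1 fun hai => (hab i hai).ne' hbi) (ha i)
  have hterm : ∀ i, b i * klFun (a i / b i) = a i * log (a i / b i) + b i - a i := by
    intro i
    rcases (hb i).eq_or_lt with hbi | hbi
    · simp [← hbi, ha_eq_zero i hbi.symm]
    · rw [klFun_apply]
      field_simp
  have hnonneg : ∀ i, 0 ≤ b i * klFun (a i / b i) :=
    fun i => mul_nonneg (hb i) (klFun_nonneg (div_nonneg (ha i) (hb i)))
  have hzero : ∑ i, b i * klFun (a i / b i) = 0 := by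
    simp only [hterm, sum_sub_distrib, sum_add_distrib, hlog, hsum]
    ring
  funext i
  rcases mul_eq_zero.1 ((sum_eq_zero_iff_of_nonneg fun i _ => hnonneg i).1 hzero i (mem_univ i))
    with hbi | hkl
  · exact (ha_eq_zero i hbi).trans hbi.symm
  · have hbi : 0 < b i := (hb i).lt_of_ne fun h0 => by simp [← h0, klFun_zero] at hkl
    exact (div_eq_one_iff_eq hbi.ne').1 ((klFun_eq_zero_iff (div_nonneg (ha i) hbi.le)).1 hkl)

section RandomVariables

variable {Ω α β γ : Type} [Fintype Ω] [Fintype α] [DecidableEq α] [Fintype β] [DecidableEq β]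
  [Fintype γ] [DecidableEq γ] {p : Ω → ℝ}

theorem sum_distOf_mul (p : Ω → ℝ) (F : Ω → α) (φ : α → ℝ) :
    ∑ a, distOf p F a * φ a = ∑ ω, p ω * φ (F ω) := by
  simp only [distOf, sum_mul, ite_mul, zero_mul]
  rw [sum_comm]
  simp

theorem sum_distOf (p : Ω → ℝ) (F : Ω → α) : ∑ a, distOf p F a = ∑ ω, p ω := by
  simpa using sum_distOf_mul p F 1

theorem distOf_nonneg (hp : ∀ ω, 0 ≤ p ω) (F : Ω → α) (a : α) : 0 ≤ distOf p F a :=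
  sum_nonneg fun ω _ => by split_ifs <;> simp [hp ω]

theorem distOf_le_distOf_comp (hp : ∀ ω, 0 ≤ p ω) (F : Ω → α) (φ : α → β) (a : α) :
    distOf p F a ≤ distOf p (fun ω => φ (F ω)) (φ a) :=
  sum_le_sum fun ω _ => by split_ifs <;> simp_all [hp ω]

theorem distOf_comp (p : Ω → ℝ) (F : Ω → α) (φ : α → β) :
    distOf p (fun ω => φ (F ω)) = distOf (distOf p F) φ := by
  funext b
  have h := sum_distOf_mul p F fun a => if φ a = b then 1 else 0
  simp only [mul_ite, mul_one, mul_zero] at h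
  exact h.symm

theorem distOf_comp_equiv (p : Ω → ℝ) (F : Ω → α) (e : α ≃ β) (a : α) :
    distOf p (fun ω => e (F ω)) (e a) = distOf p F a := by
  rw [distOf_comp]
  simp [distOf, e.injective.eq_iff]

theorem ent_comp_equiv (p : Ω → ℝ) (F : Ω → α) (e : α ≃ β) :
    ent p (fun ω => e (F ω)) = ent p F := by
  simp only [ent, ← e.sum_comp, distOf_comp_equiv]

theorem distOf_eq_sum_distOf_pair (p : Ω → ℝ) (f : Ω → α) (g : Ω → β) (b : β) :
    distOf p g b = ∑ a, distOf p (fun ω => (f ω, g ω)) (a, b) := by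
  rw [show g = fun ω => Prod.snd (f ω, g ω) from rfl, distOf_comp]
  simp [distOf, Fintype.sum_prod_type]

theorem sum_distOf_mul_log_distOf_comp (p : Ω → ℝ) (F : Ω → α) (φ : α → β) :
    ∑ a, distOf p F a * log (distOf p (fun ω => φ (F ω)) (φ a)) = -ent p (fun ω => φ (F ω)) := by
  rw [sum_distOf_mul, ← sum_distOf_mul p (fun ω => φ (F ω)) fun b => log (distOf p _ b), ent,
    ← sum_neg_distrib]
  simp [negMulLog]

theorem sum_distOf_pair_mul_distOf_pair_div (p : Ω → ℝ) (f : Ω → α) (g : Ω → β) (h : Ω → γ) :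
    ∑ x : α × β × γ, distOf p (fun ω => (f ω, h ω)) (x.1, x.2.2) *
      distOf p (fun ω => (g ω, h ω)) (x.2.1, x.2.2) / distOf p h x.2.2 = ∑ ω, p ω := by
  calc _ = ∑ c, (∑ a, distOf p (fun ω => (f ω, h ω)) (a, c)) *
        (∑ b, distOf p (fun ω => (g ω, h ω)) (b, c)) / distOf p h c := by
        simp only [Fintype.sum_prod_type]
        rw [sum_comm_cycle]
        refine sum_congr rfl fun c _ => ?_
        rw [sum_mul, sum_div]
        refine sum_congr rfl fun a _ => ?_
        rw [mul_sum, sum_div]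
    _ = ∑ c, distOf p h c := by
        simp only [← distOf_eq_sum_distOf_pair]
        exact sum_congr rfl fun c _ => mul_self_div_self _
    _ = _ := sum_distOf p h

theorem distOf_eq_mul_div_of_cmi_eq_zero (hp : ∀ ω, 0 ≤ p ω) {f : Ω → α} {g : Ω → β} {h : Ω → γ}
    (hcmi : cmi p f g h = 0) (x : α × β × γ) :
    distOf p (fun ω => (f ω, g ω, h ω)) x = distOf p (fun ω => (f ω, h ω)) (x.1, x.2.2) *
      distOf p (fun ω => (g ω, h ω)) (x.2.1, x.2.2) / distOf p h x.2.2 := by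
  set A := distOf p fun ω => (f ω, g ω, h ω)
  set Pfh := distOf p fun ω => (f ω, h ω)
  set Pgh := distOf p fun ω => (g ω, h ω)
  set Ph := distOf p h
  set B : α × β × γ → ℝ := fun x => Pfh (x.1, x.2.2) * Pgh (x.2.1, x.2.2) / Ph x.2.2 with hB
  have hA (x : α × β × γ) : 0 ≤ A x := distOf_nonneg hp _ x
  have hfh (x : α × β × γ) : A x ≤ Pfh (x.1, x.2.2) :=
    distOf_le_distOf_comp hp _ (fun x : α × β × γ => (x.1, x.2.2)) x
  have hgh (x : α × β × γ) : A x ≤ Pgh (x.2.1, x.2.2) :=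
    distOf_le_distOf_comp hp _ (fun x : α × β × γ => (x.2.1, x.2.2)) x
  have hh (x : α × β × γ) : A x ≤ Ph x.2.2 :=
    distOf_le_distOf_comp hp _ (fun x : α × β × γ => x.2.2) x
  have hAB (x : α × β × γ) (hx : 0 < A x) : 0 < B x :=
    div_pos (mul_pos (hx.trans_le (hfh x)) (hx.trans_le (hgh x))) (hx.trans_le (hh x))
  have hlog (x : α × β × γ) : A x * log (A x / B x) = A x * log (A x) + A x * log (Ph x.2.2) -
      A x * log (Pfh (x.1, x.2.2)) - A x * log (Pgh (x.2.1, x.2.2)) := by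
    rcases (hA x).eq_or_lt with hx | hx
    · simp [← hx]
    · rw [log_div hx.ne' (hAB x hx).ne', hB, log_div (mul_pos (hx.trans_le (hfh x))
        (hx.trans_le (hgh x))).ne' (hx.trans_le (hh x)).ne',
        log_mul (hx.trans_le (hfh x)).ne' (hx.trans_le (hgh x)).ne']
      ring
  have e1 : ∑ x, A x * log (A x) = -ent p fun ω => (f ω, g ω, h ω) :=
    sum_distOf_mul_log_distOf_comp p (fun ω => (f ω, g ω, h ω)) fun x : α × β × γ => x
  have e2 : ∑ x, A x * log (Ph x.2.2) = -ent p h :=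
    sum_distOf_mul_log_distOf_comp p (fun ω => (f ω, g ω, h ω)) fun x : α × β × γ => x.2.2
  have e3 : ∑ x, A x * log (Pfh (x.1, x.2.2)) = -ent p fun ω => (f ω, h ω) :=
    sum_distOf_mul_log_distOf_comp p (fun ω => (f ω, g ω, h ω)) fun x : α × β × γ => (x.1, x.2.2)
  have e4 : ∑ x, A x * log (Pgh (x.2.1, x.2.2)) = -ent p fun ω => (g ω, h ω) :=
    sum_distOf_mul_log_distOf_comp p (fun ω => (f ω, g ω, h ω)) fun x : α × β × γ => (x.2.1, x.2.2)
  have hAeqB : A = B := by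
    refine eq_of_sum_mul_log_div_eq_zero hA
      (fun x => div_nonneg (mul_nonneg (distOf_nonneg hp _ _) (distOf_nonneg hp _ _))
        (distOf_nonneg hp _ _)) hAB ?_ ?_
    · rw [sum_distOf, sum_distOf_pair_mul_distOf_pair_div]
    · simp only [hlog, sum_sub_distrib, sum_add_distrib, e1, e2, e3, e4]
      rw [← hcmi, cmi]
      ring
  exact congrFun hAeqB x

/-- The law of `G` given `F = x` (junk value `0` when `P(F = x) = 0`). -/
noncomputable def condDist (p : Ω → ℝ) (F : Ω → α) (G : Ω → β) (x : α) (y : β) : ℝ :=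
  distOf p (fun ω => (F ω, G ω)) (x, y) / distOf p F x

def IndepDist (p : Ω → ℝ) (F : Ω → α) (G : Ω → β) : Prop :=
  ∀ x y, distOf p (fun ω => (F ω, G ω)) (x, y) = distOf p F x * distOf p G y

theorem condDist_comp_equiv (p : Ω → ℝ) (F : Ω → α) (G : Ω → γ) (e : α ≃ β) (x : α) :
    condDist p (fun ω => e (F ω)) G (e x) = condDist p F G x := by
  funext y
  rw [condDist, condDist, distOf_comp_equiv]
  congr 1
  exact distOf_comp_equiv p (fun ω => (F ω, G ω)) (e.prodCongr (Equiv.refl γ)) (x, y)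

theorem condDist_pair_eq_of_cmi_eq_zero (hp : ∀ ω, 0 ≤ p ω) {f : Ω → α} {g : Ω → β} {h : Ω → γ}
    (hcmi : cmi p f g h = 0) {u : α × γ} (hu : 0 < distOf p (fun ω => (f ω, h ω)) u) :
    condDist p (fun ω => (f ω, h ω)) g u = condDist p h g u.2 := by
  funext b
  have hjoint : distOf p (fun ω => ((f ω, h ω), g ω)) (u, b) =
      distOf p (fun ω => (f ω, g ω, h ω)) (u.1, b, u.2) :=
    distOf_comp_equiv p (fun ω => (f ω, g ω, h ω))
      ((Equiv.prodCongr (Equiv.refl α) (Equiv.prodComm β γ)).trans (Equiv.prodAssoc α γ β).symm)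
      (u.1, b, u.2)
  have hpair : distOf p (fun ω => (h ω, g ω)) (u.2, b) =
      distOf p (fun ω => (g ω, h ω)) (b, u.2) :=
    distOf_comp_equiv p (fun ω => (g ω, h ω)) (Equiv.prodComm β γ) (b, u.2)
  rw [condDist, condDist, hjoint, distOf_eq_mul_div_of_cmi_eq_zero hp hcmi, hpair]
  field_simp

theorem indepDist_of_condDist_eq (hp : IsPmf p) {F : Ω → α} {G : Ω → β}
    (h : ∀ u v, 0 < distOf p F u → 0 < distOf p F v → condDist p F G u = condDist p F G v) :
    IndepDist p F G := by
  obtain ⟨u₀, -, hu₀⟩ := exists_lt_of_sum_lt (s := univ) (f := 0) (g := distOf p F)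
    (by simp [sum_distOf, hp.2])
  have hfactor (x : α) (y : β) :
      distOf p (fun ω => (F ω, G ω)) (x, y) = distOf p F x * condDist p F G u₀ y := by
    rcases (distOf_nonneg hp.1 F x).eq_or_lt with hx | hx
    · rw [← hx, zero_mul]
      exact le_antisymm (hx ▸ distOf_le_distOf_comp hp.1 _ Prod.fst (x, y)) (distOf_nonneg hp.1 _ _)
    · rw [← h x u₀ hx hu₀, condDist, mul_div_cancel₀ _ hx.ne']
  have hG (y : β) : distOf p G y = condDist p F G u₀ y := by
    rw [distOf_eq_sum_distOf_pair p F G]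
    simp only [hfactor, ← sum_mul, sum_distOf, hp.2, one_mul]
  intro x y
  rw [hfactor, hG]

theorem IndepDist.comp_left {F : Ω → α} {G : Ω → β} (hind : IndepDist p F G) (φ : α → γ) :
    IndepDist p (fun ω => φ (F ω)) G := by
  intro z y
  have hjoint := congrFun (distOf_comp p (fun ω => (F ω, G ω)) fun x => (φ x.1, x.2)) (z, y)
  rw [hjoint, distOf_comp p F φ]
  show ∑ x, (if (φ x.1, x.2) = (z, y) then distOf p (fun ω => (F ω, G ω)) x else 0) =
    (∑ x, if φ x = z then distOf p F x else 0) * distOf p G y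
  unfold IndepDist at hind
  simp [Fintype.sum_prod_type, ite_and, hind, sum_mul]

theorem IndepDist.mi_eq_zero (hp : IsPmf p) {F : Ω → α} {G : Ω → β} (hind : IndepDist p F G) :
    mi p F G = 0 := by
  have hent : ent p (fun ω => (F ω, G ω)) = ent p F + ent p G := by
    unfold IndepDist at hind
    simp only [ent, Fintype.sum_prod_type, hind, negMulLog_mul, sum_add_distrib, ← sum_mul,
      ← mul_sum, sum_distOf, hp.2]
    ring
  rw [mi, hent]
  ring

theorem cmi_eq_mi_add_mi_sub_mi_sub_mi (p : Ω → ℝ) (f : Ω → α) (g : Ω → β) (h : Ω → γ) :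
    cmi p f g h = mi p f g + mi p (fun ω => (f ω, g ω)) h - mi p f h - mi p g h := by
  have hassoc : ent p (fun ω => (f ω, g ω, h ω)) = ent p (fun ω => ((f ω, g ω), h ω)) :=
    ent_comp_equiv p (fun ω => ((f ω, g ω), h ω)) (Equiv.prodAssoc α β γ)
  rw [cmi, mi, mi, mi, mi, hassoc]
  ring

theorem cmi_eq_mi_of_indepDist (hp : IsPmf p) {f : Ω → α} {g : Ω → β} {h : Ω → γ}
    (hind : IndepDist p (fun ω => (f ω, g ω)) h) : cmi p f g h = mi p f g := by
  have hf : mi p f h = 0 := (hind.comp_left Prod.fst).mi_eq_zero hp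
  have hg : mi p g h = 0 := (hind.comp_left Prod.snd).mi_eq_zero hp
  rw [cmi_eq_mi_add_mi_sub_mi_sub_mi, hind.mi_eq_zero hp, hf, hg]
  ring

end RandomVariables

theorem stmt14_general {Ω α β γ : Type} [Fintype Ω]
    [Fintype α] [DecidableEq α] [Fintype β] [DecidableEq β]
    [Fintype γ] [DecidableEq γ]
    (p : Ω → ℝ) (hp : IsPmf p) (X : Ω → α) (Y : Ω → β) (Z : Ω → γ)
    (hconn : ∀ u v : α × β, 0 < distOf p (fun ω => (X ω, Y ω)) u →
      0 < distOf p (fun ω => (X ω, Y ω)) v →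
      Relation.ReflTransGen (blockStep (distOf p (fun ω => (X ω, Y ω)))) u v)
    (h1 : cmi p X Z Y = 0) (h2 : cmi p Y Z X = 0) :
    mi p (fun ω => (X ω, Y ω)) Z = 0 ∧ cmi p X Y Z = mi p X Y := by
  set XY : Ω → α × β := fun ω => (X ω, Y ω)
  have hcol (u : α × β) (hu : 0 < distOf p XY u) : condDist p XY Z u = condDist p Y Z u.2 :=
    condDist_pair_eq_of_cmi_eq_zero hp.1 h1 hu
  have hrow (u : α × β) (hu : 0 < distOf p XY u) : condDist p XY Z u = condDist p X Z u.1 := by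
    rw [← condDist_comp_equiv p XY Z (Equiv.prodComm α β)]
    exact condDist_pair_eq_of_cmi_eq_zero (u := u.swap) hp.1 h2
      (hu.trans_eq (distOf_comp_equiv p XY (Equiv.prodComm α β) u).symm)
  have hstep (u v : α × β) (huv : blockStep (distOf p XY) u v) :
      condDist p XY Z u = condDist p XY Z v := by
    obtain ⟨hu, hv, hsame | hsame⟩ := huv
    · rw [hrow u hu, hrow v hv, hsame]
    · rw [hcol u hu, hcol v hv, hsame]
  have hind : IndepDist p XY Z := indepDist_of_condDist_eq hp fun u v hu hv => by
    simpa only [Relation.reflTransGen_eq_self] using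
      (hconn u v hu hv).lift (p := Eq) (condDist p XY Z) hstep
  exact ⟨hind.mi_eq_zero hp, cmi_eq_mi_of_indepDist hp hind⟩

/-- If every value of `X` and of `Y` has positive probability, the block
graph of the joint distribution of `(X,Y)` is connected, and
`I(X;Z|Y) = I(Y;Z|X) = 0`, then `Z` is independent of `(X,Y)` and
`I(X;Y|Z) = I(X;Y)`. -/
theorem stmt14 {Ω α β γ : Type} [Fintype Ω]
    [Fintype α] [DecidableEq α] [Fintype β] [DecidableEq β]
    [Fintype γ] [DecidableEq γ]
    (p : Ω → ℝ) (hp : IsPmf p) (X : Ω → α) (Y : Ω → β) (Z : Ω → γ)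
    (hX : ∀ i, 0 < distOf p X i) (hY : ∀ j, 0 < distOf p Y j)
    (hconn : ∀ u v : α × β, 0 < distOf p (fun ω => (X ω, Y ω)) u →
      0 < distOf p (fun ω => (X ω, Y ω)) v →
      Relation.ReflTransGen (blockStep (distOf p (fun ω => (X ω, Y ω)))) u v)
    (h1 : cmi p X Z Y = 0) (h2 : cmi p Y Z X = 0) :
    mi p (fun ω => (X ω, Y ω)) Z = 0 ∧ cmi p X Y Z = mi p X Y :=
  stmt14_general p hp X Y Z hconn h1 h2
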